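/- (Compactness of the stochastic Koopman operator, Theorem 4.8 (i).) Let M ⊂ (0,∞)² be a nonempty compact set. The map T sending a continuous function f : M → ℝ to the function (Tf)(x) = ∫_M f(y) κ(x, y) dy (Lebesgue integral over M) is a well-defined bounded linear operator from the Banach space C(M, ℝ) with the supremum norm to itself, and T is a compact operator (the image under T of every bounded set is relatively compact). -/
import Mathlib


open MeasureTheory Matrix

/-- General fact: on a compact space with a finite Borel measure, integration against a
continuous kernel defines a compact bounded operator on `C(X, ℝ)`. -/
theorem kernel_compact_operator_aux {X : Type*} [TopologicalSpace X] [CompactSpace X]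
    [MeasurableSpace X] [OpensMeasurableSpace X] (μ : Measure X) [IsFiniteMeasure μ]
    (K : C(X × X, ℝ)) :
    ∃ T : C(X, ℝ) →L[ℝ] C(X, ℝ),
      (∀ f x, T f x = ∫ y, f y * K (x, y) ∂μ) ∧ IsCompactOperator T := by
  classical
  set m : ℝ := (μ Set.univ).toReal with hm
  have hm0 : 0 ≤ m := ENNReal.toReal_nonneg
  have hint : ∀ f g : C(X, ℝ), Integrable (fun y => f y * g y) μ := by
    intro f g
    exact (BoundedContinuousFunction.mkOfCompact (f * g)).integrable μ
  have hbound : ∀ f g : C(X, ℝ), ‖∫ y, f y * g y ∂μ‖ ≤ ‖f‖ * ‖g‖ * m := by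
    intro f g
    have h : ∀ y, ‖f y * g y‖ ≤ ‖f‖ * ‖g‖ := fun y => by
      rw [norm_mul]
      exact mul_le_mul (f.norm_coe_le_norm y) (g.norm_coe_le_norm y) (norm_nonneg _)
        (norm_nonneg f)
    exact norm_integral_le_of_norm_le_const (Filter.Eventually.of_forall h)
  have hdist : ∀ (f g g' : C(X, ℝ)),
      dist (∫ y, f y * g y ∂μ) (∫ y, f y * g' y ∂μ) ≤ ‖f‖ * dist g g' * m := by
    intro f g g'
    rw [dist_eq_norm, ← integral_sub (hint f g) (hint f g')]
    have h2 : (fun y => f y * g y - f y * g' y) = fun y => f y * (g - g') y := by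
      funext y; simp [mul_sub]
    rw [h2, dist_eq_norm]
    exact hbound f (g - g')
  let Kc : C(X, C(X, ℝ)) := K.curry
  have hcont : ∀ f : C(X, ℝ), Continuous fun x => ∫ y, f y * Kc x y ∂μ := by
    intro f
    have hL : LipschitzWith (‖f‖ * m).toNNReal (fun g : C(X, ℝ) => ∫ y, f y * g y ∂μ) := by
      apply LipschitzWith.of_dist_le_mul
      intro g g'
      refine le_trans (hdist f g g') ?_
      rw [Real.coe_toNNReal _ (by positivity)]
      ring_nf
      nlinarith [dist_nonneg (x := g) (y := g'), norm_nonneg f]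
    exact hL.continuous.comp Kc.continuous
  let L : C(X, ℝ) →ₗ[ℝ] C(X, ℝ) :=
    { toFun := fun f => ⟨fun x => ∫ y, f y * Kc x y ∂μ, hcont f⟩
      map_add' := by
        intro f g; ext x
        simp only [ContinuousMap.coe_mk, ContinuousMap.add_apply]
        rw [← integral_add (hint f (Kc x)) (hint g (Kc x))]
        congr 1; funext y; simp [add_mul]
      map_smul' := by
        intro r f; ext x
        simp only [ContinuousMap.coe_mk, ContinuousMap.smul_apply, RingHom.id_apply]
        rw [← integral_smul]
        congr 1; funext y; simp [mul_assoc]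
    }
  have hLnorm : ∀ f, ‖L f‖ ≤ ‖Kc‖ * m * ‖f‖ := by
    intro f
    apply ContinuousMap.norm_le _ (by positivity) |>.mpr
    intro x
    calc ‖L f x‖ ≤ ‖f‖ * ‖Kc x‖ * m := hbound f (Kc x)
      _ ≤ ‖f‖ * ‖Kc‖ * m := by
          have := Kc.norm_coe_le_norm x
          gcongr
      _ = ‖Kc‖ * m * ‖f‖ := by ring
  let T : C(X, ℝ) →L[ℝ] C(X, ℝ) := LinearMap.mkContinuous L (‖Kc‖ * m) hLnorm
  refine ⟨T, fun f x => by simp [T, L, Kc], ?_⟩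
  set B : Set C(X, ℝ) := Metric.closedBall 0 1 with hB
  let H := (ContinuousMap.isometryEquivBoundedOfCompact X ℝ).toHomeomorph
  set A : Set (BoundedContinuousFunction X ℝ) := H '' (T '' B) with hA
  have hins : ∀ (g : BoundedContinuousFunction X ℝ) (x : X), g ∈ A →
      g x ∈ Metric.closedBall (0 : ℝ) (‖Kc‖ * m) := by
    rintro g x ⟨h, ⟨f, hf, rfl⟩, rfl⟩
    have hf1 : ‖f‖ ≤ 1 := by rwa [hB, Metric.mem_closedBall, dist_zero_right] at hf
    simp only [Metric.mem_closedBall, dist_zero_right]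
    have heq : H (T f) x = T f x := rfl
    rw [heq]
    calc ‖T f x‖ ≤ ‖f‖ * ‖Kc x‖ * m := hbound f (Kc x)
      _ ≤ 1 * ‖Kc‖ * m := by
          have h1 := Kc.norm_coe_le_norm x
          gcongr
      _ = ‖Kc‖ * m := by ring
  have hequi : Equicontinuous (fun g : A => ⇑(g : BoundedContinuousFunction X ℝ)) := by
    intro x₀
    rw [Metric.equicontinuousAt_iff_right]
    intro ε hε
    have hKc : ContinuousAt Kc x₀ := Kc.continuous.continuousAt
    have hev : ∀ᶠ x in nhds x₀, dist (Kc x) (Kc x₀) < ε / (m + 1) :=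
      Metric.tendsto_nhds.mp hKc (ε / (m + 1)) (by positivity)
    filter_upwards [hev] with x hx
    rintro ⟨g, ⟨h, ⟨f, hf, rfl⟩, rfl⟩⟩
    have hf1 : ‖f‖ ≤ 1 := by rwa [hB, Metric.mem_closedBall, dist_zero_right] at hf
    show dist (T f x₀) (T f x) < ε
    calc dist (T f x₀) (T f x) ≤ ‖f‖ * dist (Kc x₀) (Kc x) * m := hdist f (Kc x₀) (Kc x)
      _ ≤ 1 * dist (Kc x₀) (Kc x) * m := by gcongr
      _ = dist (Kc x₀) (Kc x) * m := by ring
      _ < ε := by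
          rw [dist_comm] at hx
          calc dist (Kc x₀) (Kc x) * m ≤ dist (Kc x₀) (Kc x) * (m + 1) := by
                nlinarith [dist_nonneg (x := Kc x₀) (y := Kc x)]
            _ < (ε / (m + 1)) * (m + 1) :=
                mul_lt_mul_of_pos_right hx (by positivity)
            _ = ε := by field_simp
  have hAcomp : IsCompact (closure A) :=
    BoundedContinuousFunction.arzela_ascoli _ (isCompact_closedBall 0 (‖Kc‖ * m)) A hins hequi
  have himg : closure (⇑T '' B) = H.symm '' closure A := by
    rw [hA, ← Homeomorph.image_closure, Set.image_image]
    simp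
  refine ⟨closure (⇑T '' B), ?_, ?_⟩
  · rw [himg]; exact hAcomp.image H.symm.continuous
  · exact Filter.mem_of_superset (Metric.closedBall_mem_nhds 0 one_pos)
      (fun f hf => subset_closure (Set.mem_image_of_mem T hf))

/-- The explicit form of the Gaussian transition kernel of the Brusselator scheme. -/
noncomputable def brusselatorKer (a b τ Ω x₁ x₂ y₁ y₂ : ℝ) : ℝ :=
  Ω / (2 * Real.pi * τ * Real.sqrt (x₁ * (x₁ + a) * (x₁ * x₂ + b))) *
    Real.exp (-(Ω / (τ * (x₁ * (x₁ + a) * (x₁ * x₂ + b))) *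
      ((y₁ - (x₁ + (a - (1 + b) * x₁ + x₁ ^ 2 * x₂) * τ)) *
        ((b * x₁ + x₁ ^ 2 * x₂) * (y₁ - (x₁ + (a - (1 + b) * x₁ + x₁ ^ 2 * x₂) * τ)) +
         (b * x₁ + x₁ ^ 2 * x₂) * (y₂ - (x₂ + (b * x₁ - x₁ ^ 2 * x₂) * τ))) +
       (y₂ - (x₂ + (b * x₁ - x₁ ^ 2 * x₂) * τ)) *
        ((b * x₁ + x₁ ^ 2 * x₂) * (y₁ - (x₁ + (a - (1 + b) * x₁ + x₁ ^ 2 * x₂) * τ)) +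
         (a + x₁ + (b * x₁ + x₁ ^ 2 * x₂)) * (y₂ - (x₂ + (b * x₁ - x₁ ^ 2 * x₂) * τ))))) / 2)

theorem brusselatorKer_continuous {Z : Type*} [TopologicalSpace Z]
    {a b τ Ω : ℝ} (ha : 0 < a) (hb : 0 < b) (hτ : 0 < τ) (hΩ : 0 < Ω)
    {p q r s : Z → ℝ} (hp : Continuous p) (hq : Continuous q) (hr : Continuous r)
    (hs : Continuous s) (hppos : ∀ z, 0 < p z) (hqpos : ∀ z, 0 < q z) :
    Continuous fun z => brusselatorKer a b τ Ω (p z) (q z) (r z) (s z) := by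
  have hgc : Continuous fun z => p z * (p z + a) * (p z * q z + b) := by fun_prop
  have hgpos : ∀ z, 0 < p z * (p z + a) * (p z * q z + b) := fun z =>
    mul_pos (mul_pos (hppos z) (add_pos (hppos z) ha)) (add_pos (mul_pos (hppos z) (hqpos z)) hb)
  unfold brusselatorKer
  apply Continuous.mul
  · apply Continuous.div continuous_const (by fun_prop)
    intro z
    have h1 : (0:ℝ) < 2 * Real.pi * τ := by positivity
    exact ne_of_gt (mul_pos h1 (Real.sqrt_pos.mpr (hgpos z)))
  · apply Real.continuous_exp.comp
    apply Continuous.div_const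
    apply Continuous.neg
    apply Continuous.mul
    · exact Continuous.div continuous_const (by fun_prop)
        (fun z => ne_of_gt (mul_pos hτ (hgpos z)))
    · fun_prop

set_option maxHeartbeats 1000000 in
/-- **Compactness of the stochastic Koopman operator** (Theorem 4.8 (i)): on a nonempty
compact `M ⊂ (0,∞)²`, `f ↦ (x ↦ ∫_M f(y) κ(x,y) dy)` defines a bounded (continuous)
linear operator of `C(M, ℝ)` into itself, and this operator is compact. -/
theorem brusselator_koopman_compact
    (a b τ Ω : ℝ) (ha : 0 < a) (hb : 0 < b) (hτ : 0 < τ) (hΩ : 0 < Ω)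
    (F₀ : ℝ → ℝ → (Fin 2 → ℝ))
    (hF₀ : ∀ x₁ x₂, F₀ x₁ x₂ =
        ![x₁ + (a - (1 + b) * x₁ + x₁ ^ 2 * x₂) * τ, x₂ + (b * x₁ - x₁ ^ 2 * x₂) * τ])
    (F : ℝ → ℝ → Matrix (Fin 2) (Fin 4) ℝ)
    (hF : ∀ x₁ x₂, F x₁ x₂ = Real.sqrt (τ / Ω) •
        Matrix.of ![![Real.sqrt a, -Real.sqrt x₁, -Real.sqrt (b * x₁), x₁ * Real.sqrt x₂],
                    ![0, 0, Real.sqrt (b * x₁), -(x₁ * Real.sqrt x₂)]])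
    (Γ : ℝ → ℝ → Matrix (Fin 2) (Fin 2) ℝ)
    (hΓ : ∀ x₁ x₂, Γ x₁ x₂ = F x₁ x₂ * (F x₁ x₂)ᵀ)
    (γ : ℝ → ℝ → ℝ)
    (hγ : ∀ x₁ x₂, γ x₁ x₂ = x₁ * (x₁ + a) * (x₁ * x₂ + b))
    (κ : ℝ → ℝ → (Fin 2 → ℝ) → ℝ)
    (hκ : ∀ x₁ x₂ y, κ x₁ x₂ y =
        Ω / (2 * Real.pi * τ * Real.sqrt (γ x₁ x₂)) *
          Real.exp (-((y - F₀ x₁ x₂) ⬝ᵥ ((Γ x₁ x₂)⁻¹ *ᵥ (y - F₀ x₁ x₂))) / 2))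
    (M : Set (Fin 2 → ℝ))
    (hMpos : ∀ x ∈ M, 0 < x 0 ∧ 0 < x 1)
    (hMcomp : IsCompact M) (hMne : M.Nonempty)
    -- Lebesgue measure on `M`
    (μM : Measure M) (hμM : μM = Measure.comap Subtype.val volume) :
    ∃ T : C(M, ℝ) →L[ℝ] C(M, ℝ),
      (∀ (f : C(M, ℝ)) (x : M), T f x = ∫ y : M, f y * κ (x.1 0) (x.1 1) y.1 ∂μM)
      ∧ IsCompactOperator T := by
  -- the key pointwise identification of `κ` with the explicit kernel
  have hkey : ∀ (x₁ x₂ : ℝ), 0 < x₁ → 0 < x₂ → ∀ y : Fin 2 → ℝ,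
      κ x₁ x₂ y = brusselatorKer a b τ Ω x₁ x₂ (y 0) (y 1) := by
    intro x₁ x₂ hx₁ hx₂ y
    have hg : (0:ℝ) < x₁ * (x₁ + a) * (x₁ * x₂ + b) := by positivity
    have f0' : Real.sqrt (τ * Ω⁻¹) ^ 2 = τ * Ω⁻¹ := Real.sq_sqrt (by positivity)
    have f1 : Real.sqrt a ^ 2 = a := Real.sq_sqrt ha.le
    have f2 : Real.sqrt x₁ ^ 2 = x₁ := Real.sq_sqrt hx₁.le
    have f3 : Real.sqrt (b * x₁) ^ 2 = b * x₁ := Real.sq_sqrt (by positivity)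
    have f4 : Real.sqrt x₂ ^ 2 = x₂ := Real.sq_sqrt hx₂.le
    have hΓval : Γ x₁ x₂ = Matrix.of
        ![![τ / Ω * (a + x₁ + (b * x₁ + x₁ ^ 2 * x₂)), τ / Ω * (-(b * x₁ + x₁ ^ 2 * x₂))],
          ![τ / Ω * (-(b * x₁ + x₁ ^ 2 * x₂)), τ / Ω * (b * x₁ + x₁ ^ 2 * x₂)]] := by
      rw [hΓ, hF]
      ext i j
      fin_cases i <;> fin_cases j <;>
        · simp [Matrix.mul_apply, Fin.sum_univ_four, Matrix.transpose, Matrix.vecHead,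
            Matrix.vecTail]
          ring_nf
          simp only [f0', f1, f2, f3, f4]
          ring
    have hInv : (Γ x₁ x₂)⁻¹ = Matrix.of
        ![![Ω / (τ * (x₁ * (x₁ + a) * (x₁ * x₂ + b))) * (b * x₁ + x₁ ^ 2 * x₂),
            Ω / (τ * (x₁ * (x₁ + a) * (x₁ * x₂ + b))) * (b * x₁ + x₁ ^ 2 * x₂)],
          ![Ω / (τ * (x₁ * (x₁ + a) * (x₁ * x₂ + b))) * (b * x₁ + x₁ ^ 2 * x₂),
            Ω / (τ * (x₁ * (x₁ + a) * (x₁ * x₂ + b))) * (a + x₁ + (b * x₁ + x₁ ^ 2 * x₂))]] := by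
      apply Matrix.inv_eq_right_inv
      rw [hΓval]
      ext i j
      fin_cases i <;> fin_cases j <;>
        · simp [Matrix.mul_apply, Fin.sum_univ_two, Matrix.one_apply]
          field_simp
          ring
    have hquad : (y - F₀ x₁ x₂) ⬝ᵥ ((Γ x₁ x₂)⁻¹ *ᵥ (y - F₀ x₁ x₂)) =
        Ω / (τ * (x₁ * (x₁ + a) * (x₁ * x₂ + b))) *
        ((y 0 - (x₁ + (a - (1 + b) * x₁ + x₁ ^ 2 * x₂) * τ)) *
          ((b * x₁ + x₁ ^ 2 * x₂) * (y 0 - (x₁ + (a - (1 + b) * x₁ + x₁ ^ 2 * x₂) * τ)) +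
           (b * x₁ + x₁ ^ 2 * x₂) * (y 1 - (x₂ + (b * x₁ - x₁ ^ 2 * x₂) * τ))) +
         (y 1 - (x₂ + (b * x₁ - x₁ ^ 2 * x₂) * τ)) *
          ((b * x₁ + x₁ ^ 2 * x₂) * (y 0 - (x₁ + (a - (1 + b) * x₁ + x₁ ^ 2 * x₂) * τ)) +
           (a + x₁ + (b * x₁ + x₁ ^ 2 * x₂)) * (y 1 - (x₂ + (b * x₁ - x₁ ^ 2 * x₂) * τ)))) := by
      rw [hInv, hF₀]
      simp [Matrix.mulVec, dotProduct, Fin.sum_univ_two]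
      ring
    rw [hκ, hγ, hquad]
    rfl
  haveI : CompactSpace M := isCompact_iff_compactSpace.mp hMcomp
  haveI : IsFiniteMeasure μM := by
    constructor
    rw [hμM, (MeasurableEmbedding.subtype_coe hMcomp.isClosed.measurableSet).comap_apply,
      Subtype.coe_image_univ]
    exact hMcomp.measure_lt_top
  -- the kernel as a continuous map on `M × M`
  have hKcont : Continuous fun z : M × M =>
      brusselatorKer a b τ Ω (z.1.1 0) (z.1.1 1) (z.2.1 0) (z.2.1 1) := by
    apply brusselatorKer_continuous ha hb hτ hΩ
    · exact (continuous_apply 0).comp (continuous_subtype_val.comp continuous_fst)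
    · exact (continuous_apply 1).comp (continuous_subtype_val.comp continuous_fst)
    · exact (continuous_apply 0).comp (continuous_subtype_val.comp continuous_snd)
    · exact (continuous_apply 1).comp (continuous_subtype_val.comp continuous_snd)
    · exact fun z => (hMpos z.1.1 z.1.2).1
    · exact fun z => (hMpos z.1.1 z.1.2).2
  obtain ⟨T, hT, hTc⟩ := kernel_compact_operator_aux μM
    ⟨fun z : M × M => brusselatorKer a b τ Ω (z.1.1 0) (z.1.1 1) (z.2.1 0) (z.2.1 1), hKcont⟩
  refine ⟨T, fun f x => ?_, hTc⟩
  rw [hT f x]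
  refine integral_congr_ae (Filter.Eventually.of_forall fun y => ?_)
  have hx := hMpos x.1 x.2
  simp only [ContinuousMap.coe_mk, hkey (x.1 0) (x.1 1) hx.1 hx.2 y.1]
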